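/- Let X be an m×n Boolean matrix and let I be a finite set of positions (i,j) with X_{i,j}=1 that are pairwise incompatible. If |I| > k, then there is no exact rank-k Boolean factorization of X, i.e., there are no m×k Boolean matrix A and k×n Boolean matrix B with A∘B = X. -/

import Mathlib

/-!
Each `1` of `A ∘ B` lies in one of the `k` combinatorial rectangles
`{i | A i ℓ = 1} × {j | B ℓ j = 1}`, and any two `1`s in a common rectangle are compatible.
So a pairwise incompatible set meets each rectangle at most once, and has at most `k` elements.
-/

/-- Boolean product of an `m × k` and a `k × n` Boolean matrix:
`(A ∘ B) i j = ⋁ ℓ, A i ℓ ∧ B ℓ j`. -/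
def bProd {m k n : ℕ} (A : Fin m → Fin k → Bool) (B : Fin k → Fin n → Bool) :
    Fin m → Fin n → Bool :=
  fun i j => decide (∃ ℓ, A i ℓ = true ∧ B ℓ j = true)

/-- `D` undercovers `X`: there are no `i, j` with `X i j = 0` and `D i j = 1`. -/
def undercovers {m n : ℕ} (D X : Fin m → Fin n → Bool) : Prop :=
  ∀ i j, X i j = false → D i j = false

/-- `|M|₁`: the number of `1`-entries of the Boolean matrix `M`. -/
def ones {m n : ℕ} (M : Fin m → Fin n → Bool) : ℕ :=
  (Finset.univ.filter fun p : Fin m × Fin n => M p.1 p.2 = true).card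

section BoolProduct

variable {m k n : ℕ} {A : Fin m → Fin k → Bool} {B : Fin k → Fin n → Bool}

theorem bProd_eq_true_iff {i : Fin m} {j : Fin n} :
    bProd A B i j = true ↔ ∃ ℓ, A i ℓ = true ∧ B ℓ j = true :=
  decide_eq_true_iff

theorem bProd_eq_true_of_mem_rectangle {i : Fin m} {j : Fin n} {ℓ : Fin k}
    (hi : A i ℓ = true) (hj : B ℓ j = true) : bProd A B i j = true :=
  bProd_eq_true_iff.2 ⟨ℓ, hi, hj⟩

theorem card_le_of_pairwise_incompatible_bProd (I : Finset (Fin m × Fin n))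
    (hone : ∀ p ∈ I, bProd A B p.1 p.2 = true)
    (hpair : ∀ p ∈ I, ∀ q ∈ I, p ≠ q →
      bProd A B p.1 q.2 = false ∨ bProd A B q.1 p.2 = false) :
    I.card ≤ k := by
  have hcover : ∀ p ∈ I, ∃ ℓ, ℓ ∈ (Finset.univ : Finset (Fin k)) ∧
      (A p.1 ℓ = true ∧ B ℓ p.2 = true) :=
    fun p hp => (bProd_eq_true_iff.1 (hone p hp)).imp fun ℓ h => ⟨Finset.mem_univ ℓ, h⟩
  have hrect : ∀ ℓ ∈ (Finset.univ : Finset (Fin k)),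
      ({p ∈ I | A p.1 ℓ = true ∧ B ℓ p.2 = true} : Set (Fin m × Fin n)).Subsingleton := by
    rintro ℓ - p ⟨hp, hpA, hpB⟩ q ⟨hq, hqA, hqB⟩
    by_contra hne
    rcases hpair p hp q hq hne with h | h
    · simp [bProd_eq_true_of_mem_rectangle hpA hqB] at h
    · simp [bProd_eq_true_of_mem_rectangle hqA hpB] at h
  simpa only [Finset.card_univ, Fintype.card_fin] using
    Finset.card_le_card_of_forall_subsingleton _ hcover hrect

end BoolProduct

theorem no_exact_factorization_of_large_incompatible_set {m n k : ℕ}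
    (X : Fin m → Fin n → Bool) (I : Finset (Fin m × Fin n))
    (hone : ∀ p ∈ I, X p.1 p.2 = true)
    (hpair : ∀ p ∈ I, ∀ q ∈ I, p ≠ q → X p.1 q.2 = false ∨ X q.1 p.2 = false)
    (hcard : k < I.card) :
    ¬ ∃ (A : Fin m → Fin k → Bool) (B : Fin k → Fin n → Bool), bProd A B = X := by
  rintro ⟨A, B, rfl⟩
  exact (card_le_of_pairwise_incompatible_bProd I hone hpair).not_gt hcard
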